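/- arXiv:2405.19539 — 3 statements merged into one kernel-verified Lean document; each statement's English description precedes it below -/
import Mathlib

section
/- Let $Y_0 \in \mathbb{R}^{n \times q}$, $X \in \mathbb{R}^{n \times p}$, $U \in \mathbb{R}^{p \times r}$, $V_0 \in \mathbb{R}^{q \times r}$ with $V_0^\top V_0 = I_r$, and suppose $\mathrm{Tr}(Y_0^\top Y_0) = qn$, $\mathrm{Tr}(V_0^\top Y_0^\top Y_0 V_0) = rn$, and $\mathrm{Tr}(U^\top X^\top X U) = rn$ and $\mathrm{Tr}(V_0 U^\top X^\top X U V_0^\top) = rn$. Then $\|Y_0 V_0 - X U\|_F^2 = \|Y_0 - X U V_0^\top\|_F^2 + (r - q)n$. -/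
open Matrix BigOperators

/-- Squared Frobenius norm. -/
noncomputable def frobSq {m n : Type*} [Fintype m] [Fintype n] (A : Matrix m n ℝ) : ℝ :=
  ∑ i, ∑ j, (A i j) ^ 2

/-- Frobenius norm. -/
noncomputable def frob {m n : Type*} [Fintype m] [Fintype n] (A : Matrix m n ℝ) : ℝ :=
  Real.sqrt (frobSq A)

/-- ℓ2 → ℓ2 operator (spectral) norm of a matrix. -/
noncomputable def opNorm {m n : Type*} [Fintype m] [Fintype n] [DecidableEq n]
    (A : Matrix m n ℝ) : ℝ :=
  ‖LinearMap.toContinuousLinearMap (Matrix.toEuclideanLin A)‖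

/-- Smallest singular value of a square matrix (infimum of ‖Ax‖ over unit vectors). -/
noncomputable def sigmaMin {n : Type*} [Fintype n] [DecidableEq n] (A : Matrix n n ℝ) : ℝ :=
  ⨅ x : {x : EuclideanSpace ℝ n // ‖x‖ = 1}, ‖Matrix.toEuclideanLin A x‖

/-- Euclidean norm of a vector. -/
noncomputable def enorm {n : Type*} [Fintype n] (v : n → ℝ) : ℝ :=
  Real.sqrt (∑ i, (v i) ^ 2)

/-- Euclidean norm of row `j` of a matrix. -/
noncomputable def rowNorm {m n : Type*} [Fintype m] [Fintype n] (A : Matrix m n ℝ) (j : m) : ℝ :=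
  Real.sqrt (∑ i, (A j i) ^ 2)

lemma frobSq_eq_trace {m n : Type*} [Fintype m] [Fintype n] (A : Matrix m n ℝ) :
    frobSq A = (Aᵀ * A).trace := by
  simp only [frobSq, Matrix.trace, Matrix.diag, Matrix.mul_apply, Matrix.transpose_apply]
  rw [Finset.sum_comm]
  simp [sq]

/-- the algebraic identity connecting the CCA prediction problem to
reduced rank regression. -/
theorem stmt0 (n p q r : ℕ)
    (Y0 : Matrix (Fin n) (Fin q) ℝ) (X : Matrix (Fin n) (Fin p) ℝ)
    (U : Matrix (Fin p) (Fin r) ℝ) (V0 : Matrix (Fin q) (Fin r) ℝ)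
    (hV0 : V0ᵀ * V0 = 1)
    (h1 : (Y0ᵀ * Y0).trace = (q : ℝ) * n)
    (h2 : (V0ᵀ * Y0ᵀ * Y0 * V0).trace = (r : ℝ) * n)
    (h3 : (Uᵀ * Xᵀ * X * U).trace = (r : ℝ) * n)
    (h4 : (V0 * Uᵀ * Xᵀ * X * U * V0ᵀ).trace = (r : ℝ) * n) :
    frobSq (Y0 * V0 - X * U) = frobSq (Y0 - X * U * V0ᵀ) + ((r : ℝ) - q) * n := by
  have key : ((X * U * V0ᵀ)ᵀ * Y0).trace = ((X * U)ᵀ * (Y0 * V0)).trace := by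
    have h : (X * U * V0ᵀ)ᵀ * Y0 = V0 * (Uᵀ * Xᵀ * Y0) := by
      simp [Matrix.transpose_mul, Matrix.mul_assoc]
    rw [h, Matrix.trace_mul_comm]
    simp [Matrix.transpose_mul, Matrix.mul_assoc]
  rw [frobSq_eq_trace, frobSq_eq_trace]
  have e1 : (Y0 * V0 - X * U)ᵀ * (Y0 * V0 - X * U)
      = (Y0 * V0)ᵀ * (Y0 * V0) - (Y0 * V0)ᵀ * (X * U) - (X * U)ᵀ * (Y0 * V0)
        + (X * U)ᵀ * (X * U) := by
    simp [Matrix.transpose_sub, Matrix.sub_mul, Matrix.mul_sub]; noncomm_ring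
  have e2 : (Y0 - X * U * V0ᵀ)ᵀ * (Y0 - X * U * V0ᵀ)
      = Y0ᵀ * Y0 - Y0ᵀ * (X * U * V0ᵀ) - (X * U * V0ᵀ)ᵀ * Y0
        + (X * U * V0ᵀ)ᵀ * (X * U * V0ᵀ) := by
    simp [Matrix.transpose_sub, Matrix.sub_mul, Matrix.mul_sub]; noncomm_ring
  rw [e1, e2]
  simp only [Matrix.trace_add, Matrix.trace_sub]
  have t1 : ((Y0 * V0)ᵀ * (Y0 * V0)).trace = (r : ℝ) * n := by
    rw [← h2]; congr 1; simp [Matrix.mul_assoc]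
  have t2 : ((X * U)ᵀ * (X * U)).trace = (r : ℝ) * n := by
    rw [← h3]; congr 1; simp [Matrix.mul_assoc]
  have t3 : ((X * U * V0ᵀ)ᵀ * (X * U * V0ᵀ)).trace = (r : ℝ) * n := by
    rw [← h4]; congr 1
    simp [Matrix.transpose_mul, Matrix.mul_assoc]
  have t4 : ((Y0 * V0)ᵀ * (X * U)).trace = ((X * U)ᵀ * (Y0 * V0)).trace := by
    rw [← Matrix.trace_transpose ((Y0 * V0)ᵀ * (X * U))]
    simp [Matrix.transpose_mul]
  have t5 : (Y0ᵀ * (X * U * V0ᵀ)).trace = ((X * U * V0ᵀ)ᵀ * Y0).trace := by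
    rw [← Matrix.trace_transpose (Y0ᵀ * (X * U * V0ᵀ))]
    simp [Matrix.transpose_mul]
  rw [t1, t2, t3, t4, t5, key, h1]
  ring
end

section
/- Let $A, B \in \mathbb{R}^{p \times p}$ be symmetric positive semi-definite matrices with principal square roots $A^{1/2}, B^{1/2}$. Then $\|A^{1/2} - B^{1/2}\|_{op} \leq \frac{\|A - B\|_{op}}{\sigma_{\min}(A^{1/2}) + \sigma_{\min}(B^{1/2})}$, provided $\sigma_{\min}(A^{1/2}) + \sigma_{\min}(B^{1/2}) > 0$. -/
open Matrix BigOperators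

open scoped RealInnerProductSpace

/-!
Put `E = RA - RB`. It is symmetric, so `‖E‖ = |μ|` for an eigenvalue `μ` with a unit eigenvector
`x`. Writing `RA² - RB² = RA E + E RB` and moving `E` across the inner product in the second term
gives `⟪(RA² - RB²) x, x⟫ = μ (⟪RA x, x⟫ + ⟪RB x, x⟫)`. For a positive semidefinite `R` the
quadratic form `⟪R x, x⟫` on unit vectors is at least the smallest eigenvalue of `R`, which is
`σ_min(R)`; hence `‖E‖ (σ_min(RA) + σ_min(RB)) ≤ ‖RA² - RB²‖`.
-/

theorem Module.End.HasEigenvalue.exists_unit_eigenvector {𝕜 E : Type*} [RCLike 𝕜]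
    [NormedAddCommGroup E] [NormedSpace 𝕜 E] {f : Module.End 𝕜 E} {μ : 𝕜}
    (hμ : f.HasEigenvalue μ) : ∃ x : E, ‖x‖ = 1 ∧ f x = μ • x := by
  obtain ⟨v, hv⟩ := hμ.exists_hasEigenvector
  have hv0 : ‖v‖ ≠ 0 := norm_ne_zero_iff.mpr hv.2
  refine ⟨(‖v‖ : 𝕜)⁻¹ • v, ?_, ?_⟩
  · rw [norm_smul, norm_inv, RCLike.norm_ofReal, abs_norm, inv_mul_cancel₀ hv0]
  · rw [map_smul, hv.apply_eq_smul, smul_comm]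

section InnerProductSpace

variable {E : Type*} [NormedAddCommGroup E] [InnerProductSpace ℝ E]

theorem IsSelfAdjoint.exists_unit_eigenvector_abs_eq_norm [FiniteDimensional ℝ E] [Nontrivial E]
    {T : E →L[ℝ] E} (hT : IsSelfAdjoint T) :
    ∃ μ : ℝ, ∃ x : E, ‖x‖ = 1 ∧ T x = μ • x ∧ |μ| = ‖T‖ := by
  have hσ : (spectrum ℝ T).Nonempty :=
    ⟨_, by
      rw [ContinuousLinearMap.spectrum_eq, ← Module.End.hasEigenvalue_iff_mem_spectrum]
      exact hT.isSymmetric.hasEigenvalue_iSup_of_finiteDimensional⟩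
  obtain ⟨μ, hμσ, hμ⟩ := spectrum.exists_nnnorm_eq_spectralRadius_of_nonempty hσ
  rw [T.spectralRadius_eq_nnnorm hT] at hμ
  rw [ContinuousLinearMap.spectrum_eq, ← Module.End.hasEigenvalue_iff_mem_spectrum] at hμσ
  obtain ⟨x, hx, hTx⟩ := hμσ.exists_unit_eigenvector
  refine ⟨μ, x, hx, hTx, ?_⟩
  rw [← Real.norm_eq_abs]
  exact congrArg NNReal.toReal (ENNReal.coe_injective hμ)

theorem LinearMap.IsPositive.iInf_norm_apply_le_inner_self [FiniteDimensional ℝ E]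
    {T : E →ₗ[ℝ] E} (hT : T.IsPositive) {x : E} (hx : ‖x‖ = 1) :
    ⨅ y : {y : E // ‖y‖ = 1}, ‖T y‖ ≤ ⟪T x, x⟫ := by
  have hx0 : x ≠ 0 := norm_ne_zero_iff.mp (hx ▸ one_ne_zero)
  have : Nontrivial E := ⟨⟨x, 0, hx0⟩⟩
  have : Nonempty {y : E // y ≠ 0} := ⟨⟨x, hx0⟩⟩
  set μ := ⨅ y : {y : E // y ≠ 0}, RCLike.re ⟪T y, y⟫ / ‖(y : E)‖ ^ 2
  have hRayleigh_nonneg (y : E) : 0 ≤ RCLike.re ⟪T y, y⟫ / ‖y‖ ^ 2 :=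
    div_nonneg (hT.re_inner_nonneg_left y) (sq_nonneg _)
  have hμ_nonneg : 0 ≤ μ := le_ciInf fun y => hRayleigh_nonneg y
  have hμ_le : μ ≤ ⟪T x, x⟫ := by
    have hbdd : BddBelow (Set.range fun y : {y : E // y ≠ 0} =>
        RCLike.re ⟪T y, y⟫ / ‖(y : E)‖ ^ 2) :=
      ⟨0, by rintro _ ⟨y, rfl⟩; exact hRayleigh_nonneg y⟩
    exact (ciInf_le hbdd ⟨x, hx0⟩).trans_eq (by simp [hx])
  obtain ⟨u, hu, hTu⟩ :=
    hT.isSymmetric.hasEigenvalue_iInf_of_finiteDimensional.exists_unit_eigenvector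
  have hbdd : BddBelow (Set.range fun y : {y : E // ‖y‖ = 1} => ‖T y‖) :=
    ⟨0, by rintro _ ⟨y, rfl⟩; exact norm_nonneg _⟩
  calc ⨅ y : {y : E // ‖y‖ = 1}, ‖T y‖
      ≤ ‖T u‖ := ciInf_le hbdd ⟨u, hu⟩
    _ = μ := by rw [hTu, norm_smul, hu, mul_one]; exact Real.norm_of_nonneg hμ_nonneg
    _ ≤ ⟪T x, x⟫ := hμ_le

theorem LinearMap.inner_mul_self_sub_mul_self_apply_self {S R : E →ₗ[ℝ] E}
    (hSR : (S - R).IsSymmetric) {μ : ℝ} {x : E} (hx : (S - R) x = μ • x) :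
    ⟪(S * S - R * R) x, x⟫ = μ * (⟪S x, x⟫ + ⟪R x, x⟫) := by
  have hsplit : S * S - R * R = S * (S - R) + (S - R) * R := by noncomm_ring
  rw [hsplit, add_apply, inner_add_left, Module.End.mul_apply, Module.End.mul_apply, hSR, hx,
    map_smul, real_inner_smul_left, real_inner_smul_right, real_inner_comm x]
  ring

theorem ContinuousLinearMap.norm_sub_mul_add_le_norm_mul_self_sub_mul_self
    [FiniteDimensional ℝ E] {S R : E →L[ℝ] E} (hSR : IsSelfAdjoint (S - R)) {a b : ℝ}
    (ha : ∀ x, ‖x‖ = 1 → a ≤ ⟪S x, x⟫) (hb : ∀ x, ‖x‖ = 1 → b ≤ ⟪R x, x⟫) :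
    ‖S - R‖ * (a + b) ≤ ‖S * S - R * R‖ := by
  nontriviality E
  obtain ⟨μ, x, hx, hSRx, hμ⟩ := hSR.exists_unit_eigenvector_abs_eq_norm
  have hinner : ⟪(S * S - R * R) x, x⟫ = μ * (⟪S x, x⟫ + ⟪R x, x⟫) :=
    LinearMap.inner_mul_self_sub_mul_self_apply_self hSR.isSymmetric hSRx
  calc ‖S - R‖ * (a + b) = |μ| * (a + b) := by rw [hμ]
    _ ≤ |μ| * (⟪S x, x⟫ + ⟪R x, x⟫) := by gcongr; exacts [ha x hx, hb x hx]
    _ ≤ |⟪(S * S - R * R) x, x⟫| := by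
      rw [hinner, abs_mul]
      exact mul_le_mul_of_nonneg_left (le_abs_self _) (abs_nonneg μ)
    _ ≤ ‖S * S - R * R‖ := by
      simpa [hx] using (abs_real_inner_le_norm _ _).trans
        (mul_le_mul_of_nonneg_right ((S * S - R * R).le_opNorm x) (norm_nonneg x))

end InnerProductSpace

section Matrix

variable {n : Type*} [Fintype n] [DecidableEq n]

theorem opNorm_eq_norm_toEuclideanCLM (M : Matrix n n ℝ) :
    opNorm M = ‖toEuclideanCLM (𝕜 := ℝ) M‖ :=
  rfl

theorem Matrix.PosSemidef.sigmaMin_le_inner {M : Matrix n n ℝ} (hM : M.PosSemidef)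
    {x : EuclideanSpace ℝ n} (hx : ‖x‖ = 1) : sigmaMin M ≤ ⟪toEuclideanCLM (𝕜 := ℝ) M x, x⟫ :=
  (Matrix.isPositive_toEuclideanLin_iff.mpr hM).iInf_norm_apply_le_inner_self hx

end Matrix

theorem stmt1_general (p : ℕ) (A B RA RB : Matrix (Fin p) (Fin p) ℝ)
    (hRA : RA.PosSemidef) (hRB : RB.PosSemidef)
    (hRA2 : RA * RA = A) (hRB2 : RB * RB = B)
    (hpos : 0 < sigmaMin RA + sigmaMin RB) :
    opNorm (RA - RB) ≤ opNorm (A - B) / (sigmaMin RA + sigmaMin RB) := by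
  subst hRA2 hRB2
  rw [le_div_iff₀ hpos, opNorm_eq_norm_toEuclideanCLM, opNorm_eq_norm_toEuclideanCLM, map_sub,
    map_sub, map_mul, map_mul]
  refine ContinuousLinearMap.norm_sub_mul_add_le_norm_mul_self_sub_mul_self ?_
    (fun _ => hRA.sigmaMin_le_inner) (fun _ => hRB.sigmaMin_le_inner)
  rw [← map_sub]
  exact IsSelfAdjoint.map (hRA.1.sub hRB.1) _

/-- perturbation bound for principal PSD square roots in operator norm. -/
theorem stmt1 (p : ℕ) (A B RA RB : Matrix (Fin p) (Fin p) ℝ)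
    (hA : A.PosSemidef) (hB : B.PosSemidef)
    (hRA : RA.PosSemidef) (hRB : RB.PosSemidef)
    (hRA2 : RA * RA = A) (hRB2 : RB * RB = B)
    (hpos : 0 < sigmaMin RA + sigmaMin RB) :
    opNorm (RA - RB) ≤ opNorm (A - B) / (sigmaMin RA + sigmaMin RB) :=
  stmt1_general p A B RA RB hRA hRB hRA2 hRB2 hpos
end

section
/- (Peeling inequality.) Let $\Delta \in \mathbb{R}^{p \times q}$, let $S_u \subseteq \{1,\dots,p\}$ with $|S_u| = s_u$, and suppose the cone condition $\sum_{j \in S_u^c} \|\Delta_{j\cdot}\| \leq 3 \sum_{j \in S_u} \|\Delta_{j\cdot}\|$ holds. Let $t \geq 1$, let $J_1 \subseteq S_u^c$ be the indices of the $t$ rows of $\Delta$ in $S_u^c$ with largest Euclidean norm, and set $\widetilde{S}_u = S_u \cup J_1$. Partition $\widetilde S_u^c$ into sets $J_2,\dots,J_K$ of size at most $t$, where $J_k$ contains the indices of the $t$ largest remaining rows. Then $\sum_{k=2}^{K} \|\Delta_{J_k\cdot}\|_F \leq 3\sqrt{s_u/t}\; \|\Delta_{\widetilde S_u \cdot}\|_F$.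 -/
open Matrix BigOperators

open Finset

/-
Every row in a block J_k is dominated by each of the t rows of J_{k-1}, hence by their mean,
so ‖Δ_{J_k}‖_F ≤ √t · (∑_{J_{k-1}} ‖Δ_j‖)/t. Summing over k ≥ 2 only shifts the index, so the
right side is at most the sum over J_1 ∪ J_2 ∪ … ⊆ S_uᶜ, which the cone condition bounds by
3 ∑_{S_u} ‖Δ_j‖; Cauchy–Schwarz turns this into 3 √s_u ‖Δ_{S_u}‖_F ≤ 3 √s_u ‖Δ_{S̃_u}‖_F.
-/

lemma sqrt_sum_sq_le_sum_div_sqrt_of_forall_le {ι : Type*} {r : ι → ℝ} (hr : ∀ i, 0 ≤ r i)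
    {A B : Finset ι} {t : ℕ} (ht : 0 < t) (hA : #A = t) (hB : #B ≤ t)
    (hle : ∀ a ∈ A, ∀ b ∈ B, r b ≤ r a) :
    √(∑ b ∈ B, r b ^ 2) ≤ (∑ a ∈ A, r a) / √t := by
  set S := ∑ a ∈ A, r a
  have htR : (0 : ℝ) < t := by exact_mod_cast ht
  have hmean : ∀ b ∈ B, r b ≤ S / t := fun b hb => by
    rw [le_div_iff₀ htR, mul_comm, ← nsmul_eq_mul, ← hA, ← sum_const]
    exact sum_le_sum fun a ha => hle a ha b hb
  have hsq : ∑ b ∈ B, r b ^ 2 ≤ S ^ 2 / t :=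
    calc ∑ b ∈ B, r b ^ 2 ≤ ∑ _b ∈ B, (S / t) ^ 2 :=
          sum_le_sum fun b hb => pow_le_pow_left₀ (hr b) (hmean b hb) 2
      _ = #B * (S / t) ^ 2 := by rw [sum_const, nsmul_eq_mul]
      _ ≤ t * (S / t) ^ 2 := by gcongr
      _ = S ^ 2 / t := by field_simp
  calc √(∑ b ∈ B, r b ^ 2) ≤ √(S ^ 2 / t) := Real.sqrt_le_sqrt hsq
    _ = S / √t := by rw [Real.sqrt_div (sq_nonneg S), Real.sqrt_sq (sum_nonneg fun a _ => hr a)]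

lemma sum_le_sqrt_card_mul_sqrt_sum_sq {ι : Type*} (s : Finset ι) (f : ι → ℝ) :
    ∑ i ∈ s, f i ≤ √(#s) * √(∑ i ∈ s, f i ^ 2) := by
  rw [← Real.sqrt_mul (Nat.cast_nonneg _)]
  exact (le_abs_self _).trans (Real.abs_le_sqrt (sq_sum_le_card_mul_sum_sq))

lemma sum_Icc_two_pred_le {f : ℕ → ℝ} (hf : ∀ k, 0 ≤ f k) (K : ℕ) :
    ∑ k ∈ Icc 2 K, f (k - 1) ≤ f 1 + ∑ k ∈ Icc 2 K, f k := by
  have hinj : Set.InjOn (· - 1) (Icc 2 K : Set ℕ) := fun a ha b hb h => by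
    simp only [coe_Icc, Set.mem_Icc] at ha hb h
    omega
  have hsub : (Icc 2 K).image (· - 1) ⊆ insert 1 (Icc 2 K) := by
    intro x hx
    simp only [mem_image, mem_Icc, mem_insert] at hx ⊢
    omega
  calc ∑ k ∈ Icc 2 K, f (k - 1) = ∑ k ∈ (Icc 2 K).image (· - 1), f k := (sum_image hinj).symm
    _ ≤ ∑ k ∈ insert 1 (Icc 2 K), f k := sum_le_sum_of_subset_of_nonneg hsub fun k _ _ => hf k
    _ = f 1 + ∑ k ∈ Icc 2 K, f k := sum_insert (by simp)

lemma sum_add_sum_biUnion_eq_sum_compl {ι κ : Type*} [Fintype ι] [DecidableEq ι]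
    (f : ι → ℝ) {S A : Finset ι} {s : Finset κ} {B : κ → Finset ι} (hA : A ⊆ Sᶜ)
    (hB : s.biUnion B = (S ∪ A)ᶜ) (hdisj : (s : Set κ).PairwiseDisjoint B) :
    ∑ i ∈ A, f i + ∑ k ∈ s, ∑ i ∈ B k, f i = ∑ i ∈ Sᶜ, f i := by
  rw [← sum_biUnion hdisj, hB, compl_union, ← sdiff_eq_inter_compl, add_comm]
  exact sum_sdiff hA

theorem stmt13_general (p q su t K : ℕ)
    (Δ : Matrix (Fin p) (Fin q) ℝ) (Su : Finset (Fin p)) (J : ℕ → Finset (Fin p))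
    (hSu : Su.card = su) (ht : 1 ≤ t)
    (hcone : ∑ j ∈ Suᶜ, rowNorm Δ j ≤ 3 * ∑ j ∈ Su, rowNorm Δ j)
    (hJ1sub : J 1 ⊆ Suᶜ)
    (hpart : (Finset.Icc 2 K).biUnion J = (Su ∪ J 1)ᶜ)
    (hdisj : ∀ k ∈ Finset.Icc 2 K, ∀ l ∈ Finset.Icc 2 K, k ≠ l → Disjoint (J k) (J l))
    (hcard : ∀ k, 1 ≤ k → k < K → (J k).card = t)
    (hcardK : (J K).card ≤ t)
    (horder : ∀ k l, 1 ≤ k → k < l → l ≤ K →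
      ∀ j ∈ J k, ∀ j' ∈ J l, rowNorm Δ j' ≤ rowNorm Δ j) :
    ∑ k ∈ Finset.Icc 2 K, Real.sqrt (∑ j ∈ J k, (rowNorm Δ j) ^ 2)
      ≤ 3 * Real.sqrt ((su : ℝ) / t) * Real.sqrt (∑ j ∈ Su ∪ J 1, (rowNorm Δ j) ^ 2) := by
  set r := rowNorm Δ
  have hr : ∀ j, 0 ≤ r j := fun j => Real.sqrt_nonneg _
  have hblock : ∀ k ∈ Icc 2 K, √(∑ j ∈ J k, r j ^ 2) ≤ (∑ j ∈ J (k - 1), r j) / √t := by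
    intro k hk
    obtain ⟨hk2, hkK⟩ := mem_Icc.1 hk
    refine sqrt_sum_sq_le_sum_div_sqrt_of_forall_le hr ht (hcard _ (by omega) (by omega)) ?_
      (horder _ _ (by omega) (by omega) hkK)
    rcases hkK.lt_or_eq with hlt | rfl
    exacts [(hcard k (by omega) hlt).le, hcardK]
  have hchain : ∑ k ∈ Icc 2 K, ∑ j ∈ J (k - 1), r j ≤ ∑ j ∈ Suᶜ, r j :=
    (sum_Icc_two_pred_le (fun k => sum_nonneg fun j _ => hr j) K).trans_eq
      (sum_add_sum_biUnion_eq_sum_compl r hJ1sub hpart fun k hk l hl => hdisj k hk l hl)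
  have hSuF : √(∑ j ∈ Su, r j ^ 2) ≤ √(∑ j ∈ Su ∪ J 1, r j ^ 2) :=
    Real.sqrt_le_sqrt (sum_le_sum_of_subset_of_nonneg subset_union_left fun j _ _ => sq_nonneg _)
  have hCS := sum_le_sqrt_card_mul_sqrt_sum_sq Su r
  rw [hSu] at hCS
  calc ∑ k ∈ Icc 2 K, √(∑ j ∈ J k, r j ^ 2)
      ≤ (∑ k ∈ Icc 2 K, ∑ j ∈ J (k - 1), r j) / √t := by rw [sum_div]; exact sum_le_sum hblock
    _ ≤ 3 * (√su * √(∑ j ∈ Su ∪ J 1, r j ^ 2)) / √t := by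
        gcongr
        linarith [mul_le_mul_of_nonneg_left hSuF (Real.sqrt_nonneg su)]
    _ = 3 * √(su / t) * √(∑ j ∈ Su ∪ J 1, r j ^ 2) := by
        rw [Real.sqrt_div (Nat.cast_nonneg _)]; ring

/-- the peeling inequality. $J_1$ holds the $t$ largest rows (in Euclidean
norm) outside $S_u$, the sets $J_2,\dots,J_K$ partition the remaining indices in blocks of
the $t$ largest remaining rows, and the cone condition holds. -/
theorem stmt13 (p q su t K : ℕ)
    (Δ : Matrix (Fin p) (Fin q) ℝ) (Su : Finset (Fin p)) (J : ℕ → Finset (Fin p))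
    (hSu : Su.card = su) (ht : 1 ≤ t) (hK : 1 ≤ K)
    (hcone : ∑ j ∈ Suᶜ, rowNorm Δ j ≤ 3 * ∑ j ∈ Su, rowNorm Δ j)
    (hJ1sub : J 1 ⊆ Suᶜ) (hJ1card : (J 1).card = t)
    (hJ1top : ∀ j ∈ J 1, ∀ j' ∈ Suᶜ \ J 1, rowNorm Δ j' ≤ rowNorm Δ j)
    (hpart : (Finset.Icc 2 K).biUnion J = (Su ∪ J 1)ᶜ)
    (hdisj : ∀ k ∈ Finset.Icc 2 K, ∀ l ∈ Finset.Icc 2 K, k ≠ l → Disjoint (J k) (J l))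
    (hcard : ∀ k, 1 ≤ k → k < K → (J k).card = t)
    (hcardK : (J K).card ≤ t)
    (horder : ∀ k l, 1 ≤ k → k < l → l ≤ K →
      ∀ j ∈ J k, ∀ j' ∈ J l, rowNorm Δ j' ≤ rowNorm Δ j) :
    ∑ k ∈ Finset.Icc 2 K, Real.sqrt (∑ j ∈ J k, (rowNorm Δ j) ^ 2)
      ≤ 3 * Real.sqrt ((su : ℝ) / t) * Real.sqrt (∑ j ∈ Su ∪ J 1, (rowNorm Δ j) ^ 2) :=
  stmt13_general p q su t K Δ Su J hSu ht hcone hJ1sub hpart hdisj hcard hcardK horder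
end
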